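/- arXiv:2103.10853 — 4 statements merged into one kernel-verified Lean document; each statement's English description precedes it below -/
import Mathlib

section
/- Let E be a finite-dimensional Euclidean space and V, W ⊆ E be subspaces with W not contained in V. If w is a basis of W ∩ (V ∩ W)^⊥, then the angle σ(V,W) (defined as vol(v,w)/(vol(v)·vol(w)) for bases v of V ∩ (V∩W)^⊥ and w of W ∩ (V∩W)^⊥, where vol of a tuple of vectors is the square root of the determinant of their Gram matrix) satisfies σ(V,W) = vol(Π_{V^⊥}(w))/vol(w), where Π_{V^⊥} is the orthogonal projection onto V^⊥. -/
/-!
Write `w j = a j + b j` with `b j = Π_{Vᗮ} (w j)` and `a j = Π_V (w j)`. As `w j` and `b j` are both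
orthogonal to `V ⊓ W ≤ V`, so is `a j`; hence `a j ∈ V ⊓ (V ⊓ W)ᗮ = span v`. Replacing `w` by `b`
in the joint family `v w` is then a unitriangular change of coordinates, which leaves the Gram
determinant unchanged, and since `b ⊥ v` the Gram matrix of `v b` is block diagonal. Thus
`vol (v w) = vol v * vol b`, and `vol v ≠ 0` cancels.
-/

open scoped InnerProductSpace

/-- The volume of a tuple of vectors: the square root of the determinant of
its Gram matrix. -/
noncomputable def tupleVol {E : Type*} [NormedAddCommGroup E] [InnerProductSpace ℝ E]
    {k : ℕ} (f : Fin k → E) : ℝ :=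
  Real.sqrt (Matrix.det (Matrix.of fun i j => (inner ℝ (f i) (f j) : ℝ)))

section

open Matrix Submodule Set

variable {E : Type*} [NormedAddCommGroup E] [InnerProductSpace ℝ E]

namespace Matrix

variable {ι κ : Type*}

theorem gram_sum_smul [Fintype ι] (f : ι → E) (P : Matrix ι κ ℝ) :
    gram ℝ (fun j => ∑ i, P i j • f i) = Pᵀ * gram ℝ f * P := by
  ext j j'
  simp only [gram_apply, sum_inner, inner_sum, real_inner_smul_left, real_inner_smul_right,
    mul_apply, transpose_apply, Finset.sum_mul]
  exact Finset.sum_congr rfl fun _ _ => Finset.sum_congr rfl fun _ _ => by ring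

theorem gram_sumElim_of_orthogonal (f : ι → E) (g : κ → E) (h : ∀ i j, ⟪f i, g j⟫_ℝ = 0) :
    gram ℝ (Sum.elim f g) = fromBlocks (gram ℝ f) 0 0 (gram ℝ g) := by
  have h' : ∀ j i, ⟪g j, f i⟫_ℝ = 0 := fun j i => by rw [real_inner_comm, h]
  ext (i | j) (i' | j') <;> simp [gram_apply, h, h']

theorem det_gram_sumElim_of_sub_mem_span [Fintype ι] [Fintype κ] [DecidableEq ι] [DecidableEq κ]
    (f : ι → E) {g h : κ → E} (hgh : ∀ j, g j - h j ∈ span ℝ (range f)) :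
    (gram ℝ (Sum.elim f g)).det = (gram ℝ (Sum.elim f h)).det := by
  choose M hM using fun j => mem_span_range_iff_exists_fun ℝ |>.mp (hgh j)
  set P : Matrix (ι ⊕ κ) (ι ⊕ κ) ℝ := fromBlocks 1 (of fun i j => M j i) 0 1
  have hP : Sum.elim f g = fun q => ∑ p, P p q • Sum.elim f h p := by
    ext (i | j)
    · simp [P, Fintype.sum_sum_type, Matrix.one_apply]
    · simp [P, Fintype.sum_sum_type, Matrix.one_apply, hM]
  have hdetP : P.det = 1 := by simp [P]
  rw [hP, gram_sum_smul, det_mul, det_mul, det_transpose, hdetP, one_mul, mul_one]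

end Matrix

theorem tupleVol_eq_sqrt_det_gram {k : ℕ} (f : Fin k → E) : tupleVol f = √(gram ℝ f).det := rfl

theorem tupleVol_pos {k : ℕ} {f : Fin k → E} (hf : LinearIndependent ℝ f) : 0 < tupleVol f :=
  Real.sqrt_pos.mpr (posDef_gram_of_linearIndependent hf).det_pos

theorem tupleVol_append {k l : ℕ} (f : Fin k → E) {g h : Fin l → E}
    (hgh : ∀ j, g j - h j ∈ span ℝ (range f)) (hfh : ∀ i j, ⟪f i, h j⟫_ℝ = 0) :
    tupleVol (Fin.append f g) = tupleVol f * tupleVol h := by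
  have hdet : ∀ g' : Fin l → E,
      (gram ℝ (Fin.append f g')).det = (gram ℝ (Sum.elim f g')).det := fun g' => by
    rw [← Fin.append_comp_sumElim]
    exact (det_submatrix_equiv_self finSumFinEquiv _).symm
  rw [tupleVol_eq_sqrt_det_gram, hdet, det_gram_sumElim_of_sub_mem_span f hgh,
    gram_sumElim_of_orthogonal f h hfh, det_fromBlocks_zero₂₁,
    Real.sqrt_mul (posSemidef_gram ℝ f).det_nonneg]
  rfl

theorem Submodule.starProjection_mem_orthogonal_of_le {U V : Submodule ℝ E}
    [V.HasOrthogonalProjection] (hUV : U ≤ V) {x : E} (hx : x ∈ Uᗮ) :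
    V.starProjection x ∈ Uᗮ := by
  rw [← sub_sub_cancel x (V.starProjection x)]
  exact sub_mem hx (orthogonal_le hUV (V.sub_starProjection_mem_orthogonal x))

theorem Module.Basis.span_range_coe {ι : Type*} {S : Submodule ℝ E} (v : Module.Basis ι ℝ S) :
    span ℝ (range fun i => (v i : E)) = S := by
  rw [show (fun i => (v i : E)) = S.subtype ∘ v from rfl, range_comp, span_image, v.span_eq,
    map_subtype_top]

end

theorem stmt0_general {E : Type*} [NormedAddCommGroup E] [InnerProductSpace ℝ E]
    [FiniteDimensional ℝ E] (V W : Submodule ℝ E)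
    {k l : ℕ} (v : Module.Basis (Fin k) ℝ ↥(V ⊓ (V ⊓ W)ᗮ)) (w : Module.Basis (Fin l) ℝ ↥(W ⊓ (V ⊓ W)ᗮ)) :
    tupleVol (Fin.append (fun i => (v i : E)) (fun j => (w j : E))) /
        (tupleVol (fun i => (v i : E)) * tupleVol (fun j => (w j : E)))
      = tupleVol (fun j => ((Submodule.orthogonalProjection Vᗮ (w j : E) : Vᗮ) : E)) /
          tupleVol (fun j => (w j : E)) := by
  have hvol : tupleVol (Fin.append (fun i => (v i : E)) (fun j => (w j : E)))
      = tupleVol (fun i => (v i : E)) * tupleVol (fun j => Vᗮ.starProjection (w j : E)) := by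
    refine tupleVol_append _ (fun j => ?_) (fun i j => ?_)
    · rw [v.span_range_coe, Submodule.starProjection_orthogonal_val, sub_sub_cancel]
      exact ⟨V.starProjection_apply_mem _,
        Submodule.starProjection_mem_orthogonal_of_le inf_le_left (w j).2.2⟩
    · exact Submodule.inner_right_of_mem_orthogonal (v i).2.1 (Vᗮ.starProjection_apply_mem _)
  have hv : tupleVol (fun i => (v i : E)) ≠ 0 :=
    (tupleVol_pos (v.linearIndependent.map' _ (Submodule.ker_subtype _))).ne'
  rw [hvol, mul_div_mul_left _ _ hv]
  rfl

/-- If `W ⊄ V` and `w` is a basis of `W ⊓ (V ⊓ W)ᗮ` (and `v` any basis of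
`V ⊓ (V ⊓ W)ᗮ`), then the angle `σ(V,W) = vol(v w)/(vol v · vol w)` equals
`vol(Π_{Vᗮ} w)/vol w`. -/
theorem stmt0 {E : Type*} [NormedAddCommGroup E] [InnerProductSpace ℝ E]
    [FiniteDimensional ℝ E] (V W : Submodule ℝ E) (hWV : ¬ W ≤ V)
    {k l : ℕ} (v : Module.Basis (Fin k) ℝ ↥(V ⊓ (V ⊓ W)ᗮ)) (w : Module.Basis (Fin l) ℝ ↥(W ⊓ (V ⊓ W)ᗮ)) :
    tupleVol (Fin.append (fun i => (v i : E)) (fun j => (w j : E))) /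
        (tupleVol (fun i => (v i : E)) * tupleVol (fun j => (w j : E)))
      = tupleVol (fun j => ((Submodule.orthogonalProjection Vᗮ (w j : E) : Vᗮ) : E)) /
          tupleVol (fun j => (w j : E)) :=
  stmt0_general V W v w
end

section
/- The definition of the angle σ(V,W) between two subspaces V, W of a Euclidean space E is independent of the choice of bases: if v, v' are bases of V ∩ (V∩W)^⊥ and w, w' are bases of W ∩ (V∩W)^⊥, then vol(v w)/(vol(v)vol(w)) = vol(v' w')/(vol(v')vol(w')). -/
open scoped InnerProductSpace

/-!
Changing a basis `g` of a subspace to another basis `f = g A` multiplies the Gram determinant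
by `(det A)²`, hence `vol` by `|det A|`. Changing both `v` and `w` is the block-diagonal change
`diag(P, Q)` on the concatenation `(v w)`, so numerator and denominator of the ratio are both
multiplied by `|det P| · |det Q| ≠ 0`.
-/

section

open Matrix

variable {E : Type*} [NormedAddCommGroup E] [InnerProductSpace ℝ E]

theorem Matrix.gram_eq_transpose_mul_gram_mul {ι κ : Type*} [Fintype ι] {g : ι → E}
    {f : κ → E} {A : Matrix ι κ ℝ} (hf : ∀ j, f j = ∑ i, A i j • g i) :
    gram ℝ f = Aᵀ * gram ℝ g * A := by
  ext a b
  simp only [gram_apply, mul_apply, transpose_apply, hf, sum_inner, inner_sum,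
    real_inner_smul_left, real_inner_smul_right, Finset.sum_mul]
  exact Finset.sum_congr rfl fun i _ => Finset.sum_congr rfl fun j _ => by ring

theorem tupleVol_eq_abs_det_mul {n : ℕ} {g f : Fin n → E} {A : Matrix (Fin n) (Fin n) ℝ}
    (hf : ∀ j, f j = ∑ i, A i j • g i) :
    tupleVol f = |A.det| * tupleVol g := by
  change √(gram ℝ f).det = |A.det| * √(gram ℝ g).det
  rw [gram_eq_transpose_mul_gram_mul hf, det_mul, det_mul, det_transpose,
    mul_right_comm, ← sq, Real.sqrt_mul (sq_nonneg _), Real.sqrt_sq_eq_abs]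

theorem Fin.append_eq_sum_smul {m n : ℕ} {g f : Fin m → E} {g' f' : Fin n → E}
    {A : Matrix (Fin m) (Fin m) ℝ} {B : Matrix (Fin n) (Fin n) ℝ}
    (hf : ∀ j, f j = ∑ i, A i j • g i) (hf' : ∀ j, f' j = ∑ i, B i j • g' i) (j : Fin (m + n)) :
    Fin.append f f' j =
      ∑ i, reindex finSumFinEquiv finSumFinEquiv (fromBlocks A 0 0 B) i j • Fin.append g g' i := by
  rw [← finSumFinEquiv.sum_comp, Fintype.sum_sum_type]
  induction j using Fin.addCases <;> simp [hf, hf']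

theorem tupleVol_append_eq_abs_det_mul {m n : ℕ} {g f : Fin m → E} {g' f' : Fin n → E}
    {A : Matrix (Fin m) (Fin m) ℝ} {B : Matrix (Fin n) (Fin n) ℝ}
    (hf : ∀ j, f j = ∑ i, A i j • g i) (hf' : ∀ j, f' j = ∑ i, B i j • g' i) :
    tupleVol (Fin.append f f') = |A.det| * |B.det| * tupleVol (Fin.append g g') := by
  rw [tupleVol_eq_abs_det_mul (Fin.append_eq_sum_smul hf hf'), det_reindex_self,
    det_fromBlocks_zero₂₁, abs_mul]

namespace Module.Basis

variable {p : Submodule ℝ E} {ι ι' : Type*}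

theorem coe_eq_sum_toMatrix_smul [Fintype ι] (b : Basis ι ℝ p) (b' : ι' → p) (j : ι') :
    (b' j : E) = ∑ i, b.toMatrix b' i j • (b i : E) := by
  rw [← b.sum_toMatrix_smul_self b' j, Submodule.coe_sum]
  rfl

theorem det_toMatrix_ne_zero [Fintype ι] [DecidableEq ι] (b b' : Basis ι ℝ p) :
    (b.toMatrix b').det ≠ 0 :=
  (b.det_apply b' ▸ b.isUnit_det b').ne_zero

theorem fin_card_eq {k k' : ℕ} (b : Basis (Fin k) ℝ p) (b' : Basis (Fin k') ℝ p) : k = k' := by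
  simpa using Fintype.card_congr (b.indexEquiv b')

end Module.Basis

end

theorem stmt3_general {E : Type*} [NormedAddCommGroup E] [InnerProductSpace ℝ E]
    (V W : Submodule ℝ E)
    {k k' l l' : ℕ}
    (v : Module.Basis (Fin k) ℝ ↥(V ⊓ (V ⊓ W)ᗮ)) (v' : Module.Basis (Fin k') ℝ ↥(V ⊓ (V ⊓ W)ᗮ))
    (w : Module.Basis (Fin l) ℝ ↥(W ⊓ (V ⊓ W)ᗮ)) (w' : Module.Basis (Fin l') ℝ ↥(W ⊓ (V ⊓ W)ᗮ)) :
    tupleVol (Fin.append (fun i => (v i : E)) (fun j => (w j : E))) /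
        (tupleVol (fun i => (v i : E)) * tupleVol (fun j => (w j : E)))
      = tupleVol (Fin.append (fun i => (v' i : E)) (fun j => (w' j : E))) /
          (tupleVol (fun i => (v' i : E)) * tupleVol (fun j => (w' j : E))) := by
  obtain rfl := v.fin_card_eq v'
  obtain rfl := w.fin_card_eq w'
  have hv := v.coe_eq_sum_toMatrix_smul v'
  have hw := w.coe_eq_sum_toMatrix_smul w'
  have hdet : |(v.toMatrix v').det| * |(w.toMatrix w').det| ≠ 0 := by
    simp [v.det_toMatrix_ne_zero v', w.det_toMatrix_ne_zero w']
  rw [tupleVol_append_eq_abs_det_mul hv hw, tupleVol_eq_abs_det_mul hv,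
    tupleVol_eq_abs_det_mul hw, mul_mul_mul_comm, mul_div_mul_left _ _ hdet]

/-- The defining ratio of the angle `σ(V,W)` does not depend on
the choice of bases: if `v, v'` are bases of `V ⊓ (V ⊓ W)ᗮ` and `w, w'` are bases of
`W ⊓ (V ⊓ W)ᗮ`, then `vol(v w)/(vol v · vol w) = vol(v' w')/(vol v' · vol w')`. -/
theorem stmt3 {E : Type*} [NormedAddCommGroup E] [InnerProductSpace ℝ E]
    [FiniteDimensional ℝ E] (V W : Submodule ℝ E) (hVW : ¬ V ≤ W) (hWV : ¬ W ≤ V)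
    {k k' l l' : ℕ}
    (v : Module.Basis (Fin k) ℝ ↥(V ⊓ (V ⊓ W)ᗮ)) (v' : Module.Basis (Fin k') ℝ ↥(V ⊓ (V ⊓ W)ᗮ))
    (w : Module.Basis (Fin l) ℝ ↥(W ⊓ (V ⊓ W)ᗮ)) (w' : Module.Basis (Fin l') ℝ ↥(W ⊓ (V ⊓ W)ᗮ)) :
    tupleVol (Fin.append (fun i => (v i : E)) (fun j => (w j : E))) /
        (tupleVol (fun i => (v i : E)) * tupleVol (fun j => (w j : E)))
      = tupleVol (Fin.append (fun i => (v' i : E)) (fun j => (w' j : E))) /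
          (tupleVol (fun i => (v' i : E)) * tupleVol (fun j => (w' j : E))) :=
  stmt3_general V W v v' w w'
end

section
/- Let M, N be metrizable topological spaces with M compact, K ⊆ N a closed subset, φ: K → T a continuous map to a metrizable space T, and fix ε > 0. For a subset S ⊆ M, let #_ε(S) denote the minimum number of open sets of diameter < ε needed to cover S. Then the function (f, t) ↦ #_ε(f^{-1}(φ^{-1}(t))) is upper semicontinuous on C⁰(M,N) × T (with the uniform topology on C⁰(M,N)); in particular it is Borel measurable. -/
open Metric

/-- The `ε`-covering number of a set `S`: the minimal number of open sets of diameter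
less than `ε` needed to cover `S` (`⊤` if no finite cover exists). -/
noncomputable def covNum {M : Type*} [MetricSpace M] (ε : ℝ) (S : Set M) : ℕ∞ :=
  sInf {n : ℕ∞ | ∃ 𝒰 : Finset (Set M), (𝒰.card : ℕ∞) = n ∧
    (∀ U ∈ 𝒰, IsOpen U ∧ Metric.diam U < ε) ∧ S ⊆ ⋃ U ∈ 𝒰, (U : Set M)}

/-- Let `M` be a compact metrizable space, `N, T` metrizable,
`K ⊆ N` closed, `φ : K → T` continuous and `ε > 0`. Then
`(f, t) ↦ #_ε(f⁻¹(φ⁻¹(t)))` is upper semicontinuous on `C(M,N) × T`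
(with the uniform topology on `C(M,N)`); in particular it is Borel measurable. -/
theorem stmt8 {M N T : Type*} [MetricSpace M] [CompactSpace M] [MetricSpace N]
    [MetricSpace T] (K : Set N) (hK : IsClosed K) (φ : C(K, T)) (ε : ℝ) (hε : 0 < ε) :
    UpperSemicontinuous (fun ft : C(M, N) × T =>
      covNum ε {p : M | ∃ h : ft.1 p ∈ K, φ ⟨ft.1 p, h⟩ = ft.2}) ∧
    @Measurable (C(M, N) × T) ℕ∞ (borel _) _ (fun ft =>
      covNum ε {p : M | ∃ h : ft.1 p ∈ K, φ ⟨ft.1 p, h⟩ = ft.2}) := by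
  set F : C(M, N) × T → ℕ∞ := fun ft =>
    covNum ε {p : M | ∃ h : ft.1 p ∈ K, φ ⟨ft.1 p, h⟩ = ft.2} with hF
  -- The "graph" of φ viewed inside N × T is closed.
  have hGclosed : IsClosed {nt : N × T | ∃ h : nt.1 ∈ K, φ ⟨nt.1, h⟩ = nt.2} := by
    have h1 : IsClosed {kt : K × T | φ kt.1 = kt.2} :=
      isClosed_eq (φ.continuous.comp continuous_fst) continuous_snd
    have h2 : IsClosedMap (fun kt : K × T => ((kt.1 : N), kt.2)) :=
      (hK.isClosedEmbedding_subtypeVal.isProperMap.prodMap isProperMap_id).isClosedMap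
    have himg := h2 _ h1
    convert himg using 1
    ext ⟨n, t⟩
    constructor
    · rintro ⟨h, hφ⟩
      exact ⟨(⟨n, h⟩, t), hφ, rfl⟩
    · rintro ⟨⟨k, t'⟩, hφ, heq⟩
      obtain ⟨h1', h2'⟩ := Prod.mk.injEq .. ▸ heq
      subst h2'
      exact ⟨h1' ▸ k.2, by simpa [← h1'] using hφ⟩
  -- The "bad" set A is closed in M × (C(M,N) × T).
  have hA : IsClosed {q : M × (C(M, N) × T) |
      ∃ h : q.2.1 q.1 ∈ K, φ ⟨q.2.1 q.1, h⟩ = q.2.2} := by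
    have hcont : Continuous fun q : M × (C(M, N) × T) => (q.2.1 q.1, q.2.2) := by
      apply Continuous.prodMk
      · exact (continuous_eval.comp ((continuous_fst.comp continuous_snd).prodMk
          continuous_fst))
      · exact continuous_snd.comp continuous_snd
    exact hGclosed.preimage hcont
  have husc : UpperSemicontinuous F := by
    intro x c hc
    obtain ⟨n, ⟨𝒰, hcard, hopen, hcover⟩, hnc⟩ := sInf_lt_iff.mp hc
    set O : Set M := ⋃ U ∈ 𝒰, (U : Set M) with hO
    have hOopen : IsOpen O := isOpen_biUnion fun U hU => (hopen U hU).1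
    have hsub : Oᶜ ×ˢ ({x} : Set (C(M, N) × T)) ⊆
        {q : M × (C(M, N) × T) | ∃ h : q.2.1 q.1 ∈ K, φ ⟨q.2.1 q.1, h⟩ = q.2.2}ᶜ := by
      rintro ⟨p, y⟩ ⟨hp, hy⟩
      simp only [Set.mem_singleton_iff] at hy
      subst hy
      intro hmem
      exact hp (hcover hmem)
    obtain ⟨u, w, hu, hw, hOu, hxw, huw⟩ :=
      generalized_tube_lemma (hOopen.isClosed_compl.isCompact) isCompact_singleton
        hA.isOpen_compl hsub
    filter_upwards [hw.mem_nhds (hxw rfl)] with y hy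
    refine lt_of_le_of_lt ?_ hnc
    apply sInf_le
    refine ⟨𝒰, hcard, hopen, ?_⟩
    intro p hp
    by_contra hpO
    exact huw (Set.mk_mem_prod (hOu hpO) hy) hp
  refine ⟨husc, ?_⟩
  letI : MeasurableSpace (C(M, N) × T) := borel _
  haveI : BorelSpace (C(M, N) × T) := ⟨rfl⟩
  have hIio : ∀ y : ℕ∞, MeasurableSet (F ⁻¹' Set.Iio y) := fun y =>
    (husc.isOpen_preimage y).measurableSet
  apply measurable_to_countable'
  intro x
  cases x with
  | top =>
    have hset : F ⁻¹' {⊤} = (⋃ n : ℕ, F ⁻¹' Set.Iio (n : ℕ∞))ᶜ := by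
      ext a
      simp only [Set.mem_preimage, Set.mem_singleton_iff, Set.mem_compl_iff,
        Set.mem_iUnion, Set.mem_Iio, not_exists, not_lt]
      constructor
      · intro h n; simp [h]
      · intro h
        cases hfa : F a with
        | top => rfl
        | coe m =>
          have := h (m + 1)
          rw [hfa] at this
          exact absurd this (by exact_mod_cast Nat.not_succ_le_self m)
    rw [hset]
    exact (MeasurableSet.iUnion fun n => hIio _).compl
  | coe n =>
    have hset : F ⁻¹' {(n : ℕ∞)} = F ⁻¹' Set.Iio ((n + 1 : ℕ) : ℕ∞) \ F ⁻¹' Set.Iio (n : ℕ∞) := by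
      ext a
      simp only [Set.mem_preimage, Set.mem_singleton_iff, Set.mem_diff, Set.mem_Iio, not_lt]
      constructor
      · intro h
        rw [h]
        exact ⟨by exact_mod_cast Nat.lt_succ_self n, le_refl _⟩
      · rintro ⟨h1, h2⟩
        cases hfa : F a with
        | top => rw [hfa] at h1; exact absurd h1 (not_top_lt)
        | coe m =>
          rw [hfa] at h1 h2
          have h1' : m < n + 1 := by exact_mod_cast h1
          have h2' : n ≤ m := by exact_mod_cast h2
          congr 1
          omega
    rw [hset]
    exact (hIio _).diff (hIio _)
end

section
/- Let M, N be metrizable topological spaces with M compact, K ⊆ N closed, φ: K → T continuous with T metrizable. Then for every compact A ⊆ M the function (f,t) ↦ #(f^{-1}(φ^{-1}(t)) ∩ A) ∈ ℕ ∪ {∞} is Borel measurable on C⁰(M,N) × T. -/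
lemma aux_le_encard_iff {α : Type*} (S : Set α) (k : ℕ) :
    (k : ℕ∞) ≤ S.encard ↔ ∃ s : Fin k → α, Function.Injective s ∧ ∀ i, s i ∈ S := by
  constructor
  · intro h
    obtain ⟨t, hts, ht⟩ := Set.exists_subset_encard_eq h
    have htf : t.Finite := Set.finite_of_encard_eq_coe ht
    haveI := htf.fintype
    have hc : Fintype.card t = k := by
      have h2 := Set.encard_eq_coe_toFinset_card t
      rw [ht, Set.toFinset_card] at h2
      exact_mod_cast h2.symm
    let e := Fintype.equivFinOfCardEq hc
    refine ⟨fun i => (e.symm i : α), ?_, fun i => hts (e.symm i).2⟩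
    intro i j hij
    exact e.symm.injective (Subtype.coe_injective hij)
  · rintro ⟨s, hinj, hmem⟩
    have h1 : (Set.range s).encard = k := by
      rw [← Set.image_univ, hinj.encard_image, Set.encard_univ]
      simp
    rw [← h1]
    exact Set.encard_mono (Set.range_subset_iff.2 hmem)

lemma aux_sep {α : Type*} [MetricSpace α] {k : ℕ} {s : Fin k → α} (hinj : Function.Injective s) :
    ∃ m : ℕ, ∀ i j, i ≠ j → 1/(m+1 : ℝ) ≤ dist (s i) (s j) := by
  set P := Finset.univ.filter (fun p : Fin k × Fin k => p.1 ≠ p.2) with hP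
  rcases P.eq_empty_or_nonempty with he | hne
  · refine ⟨0, fun i j hij => ?_⟩
    exact absurd (by simp [hP, hij] : ((i,j) : Fin k × Fin k) ∈ P)
      (by rw [he]; exact Finset.notMem_empty _)
  · set δ := P.inf' hne (fun p => dist (s p.1) (s p.2)) with hδ
    have hδpos : 0 < δ := by
      rw [hδ, Finset.lt_inf'_iff]
      rintro ⟨i, j⟩ hij
      simp only [hP, Finset.mem_filter] at hij
      exact dist_pos.2 (fun h => hij.2 (hinj h))
    obtain ⟨m, hm⟩ := exists_nat_one_div_lt hδpos
    refine ⟨m, fun i j hij => ?_⟩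
    have hmemP : ((i, j) : Fin k × Fin k) ∈ P := by simp [hP, hij]
    have h3 : δ ≤ dist (s i) (s j) :=
      Finset.inf'_le (fun p : Fin k × Fin k => dist (s p.1) (s p.2)) hmemP
    linarith

/-- Let `M` be a compact metrizable space, `N, T` metrizable,
`K ⊆ N` closed and `φ : K → T` continuous. Then for every compact `A ⊆ M` the function
`(f, t) ↦ #(f⁻¹(φ⁻¹(t)) ∩ A) ∈ ℕ ∪ {∞}` is Borel measurable on `C(M,N) × T`
(with the uniform topology on `C(M,N)`). -/
theorem stmt9 {M N T : Type*} [MetricSpace M] [CompactSpace M] [MetricSpace N]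
    [MetricSpace T] (K : Set N) (hK : IsClosed K) (φ : C(K, T))
    (A : Set M) (hA : IsCompact A) :
    @Measurable (C(M, N) × T) ℕ∞ (borel _) _ (fun ft =>
      ({p : M | ∃ h : ft.1 p ∈ K, φ ⟨ft.1 p, h⟩ = ft.2} ∩ A).encard) := by
  letI : MeasurableSpace (C(M, N) × T) := borel _
  haveI : BorelSpace (C(M, N) × T) := ⟨rfl⟩
  set g : C(M, N) × T → ℕ∞ := fun ft =>
    ({p : M | ∃ h : ft.1 p ∈ K, φ ⟨ft.1 p, h⟩ = ft.2} ∩ A).encard with hg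
  set F : ℕ → ℕ → Set (C(M, N) × T) := fun k m =>
    {ft | ∃ s : Fin k → M,
      (∀ i, s i ∈ A ∧ ∃ h : ft.1 (s i) ∈ K, φ ⟨ft.1 (s i), h⟩ = ft.2) ∧
      ∀ i j, i ≠ j → 1 / (m + 1 : ℝ) ≤ dist (s i) (s j)} with hF
  have hFclosed : ∀ k m : ℕ, IsClosed (F k m) := by
    intro k m
    apply IsSeqClosed.isClosed
    intro x a hx hlim
    simp only [hF, Set.mem_setOf_eq] at hx ⊢
    choose s hsmem hsep using hx
    have hsA : ∀ n, (s n) ∈ Set.pi Set.univ (fun _ : Fin k => A) :=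
      fun n i _ => (hsmem n i).1
    obtain ⟨u, hu, σ, hσ, hus⟩ :=
      (isCompact_univ_pi (fun _ : Fin k => hA)).tendsto_subseq hsA
    have huA : ∀ i, u i ∈ A := fun i => hu i (Set.mem_univ i)
    have hui : ∀ i, Filter.Tendsto (fun n => s (σ n) i) Filter.atTop (nhds (u i)) :=
      fun i => tendsto_pi_nhds.mp hus i
    have hf : Filter.Tendsto (fun n => (x n).1) Filter.atTop (nhds a.1) :=
      (continuous_fst.tendsto a).comp hlim
    have ht : Filter.Tendsto (fun n => (x n).2) Filter.atTop (nhds a.2) :=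
      (continuous_snd.tendsto a).comp hlim
    have hU : TendstoUniformly (fun n p => (x n).1 p) a.1 Filter.atTop :=
      ContinuousMap.tendsto_iff_tendstoUniformly.mp hf
    have hUσ : TendstoUniformly (fun n p => (x (σ n)).1 p) a.1 Filter.atTop :=
      fun v hv => (hσ.tendsto_atTop).eventually (hU v hv)
    have hval : ∀ i, Filter.Tendsto (fun n => (x (σ n)).1 (s (σ n) i))
        Filter.atTop (nhds (a.1 (u i))) :=
      fun i => hUσ.tendsto_comp (a.1.continuous.continuousAt) (hui i)
    refine ⟨u, fun i => ⟨huA i, ?_⟩, fun i j hij => ?_⟩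
    · have hin : ∀ n, (x (σ n)).1 (s (σ n) i) ∈ K := fun n => (hsmem (σ n) i).2.choose
      have heq : ∀ n, φ ⟨(x (σ n)).1 (s (σ n) i), hin n⟩ = (x (σ n)).2 :=
        fun n => (hsmem (σ n) i).2.choose_spec
      have hKmem : a.1 (u i) ∈ K :=
        hK.mem_of_tendsto (hval i) (Filter.Eventually.of_forall hin)
      refine ⟨hKmem, ?_⟩
      have hsub : Filter.Tendsto (fun n => (⟨(x (σ n)).1 (s (σ n) i), hin n⟩ : K))
          Filter.atTop (nhds ⟨a.1 (u i), hKmem⟩) := by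
        rw [tendsto_subtype_rng]; exact hval i
      have hφ : Filter.Tendsto (fun n => φ (⟨(x (σ n)).1 (s (σ n) i), hin n⟩ : K))
          Filter.atTop (nhds (φ ⟨a.1 (u i), hKmem⟩)) :=
        (φ.continuous.tendsto _).comp hsub
      have hφ2 : Filter.Tendsto (fun n => (x (σ n)).2) Filter.atTop
          (nhds (φ ⟨a.1 (u i), hKmem⟩)) := by
        refine hφ.congr fun n => heq n
      exact tendsto_nhds_unique hφ2 (ht.comp hσ.tendsto_atTop)
    · exact ge_of_tendsto' ((hui i).dist (hui j)) (fun n => hsep (σ n) i j hij)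
  have hE : ∀ k : ℕ, {ft | (k : ℕ∞) ≤ g ft} = ⋃ m, F k m := by
    intro k
    ext ft
    simp only [Set.mem_setOf_eq, Set.mem_iUnion, hg, hF]
    rw [aux_le_encard_iff]
    constructor
    · rintro ⟨s, hinj, hmem⟩
      obtain ⟨m, hm⟩ := aux_sep hinj
      exact ⟨m, s, fun i => ⟨(hmem i).2, (hmem i).1⟩, hm⟩
    · rintro ⟨m, s, hmem, hsep⟩
      have hinj : Function.Injective s := by
        intro i j hij
        by_contra hne
        have h1 := hsep i j hne
        rw [hij, dist_self] at h1
        have h2 : (0:ℝ) < 1 / (m + 1 : ℝ) := by positivity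
        linarith
      exact ⟨s, hinj, fun i => ⟨(hmem i).2, (hmem i).1⟩⟩
  have hEmeas : ∀ k : ℕ, MeasurableSet {ft | (k : ℕ∞) ≤ g ft} := by
    intro k
    rw [hE k]
    exact MeasurableSet.iUnion fun m => (hFclosed k m).measurableSet
  apply measurable_to_countable'
  intro y
  induction y using ENat.recTopCoe with
  | top =>
    have h1 : g ⁻¹' {⊤} = ⋂ k : ℕ, {ft | (k : ℕ∞) ≤ g ft} := by
      ext ft
      simp only [Set.mem_preimage, Set.mem_singleton_iff, Set.mem_iInter, Set.mem_setOf_eq]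
      constructor
      · intro h k; simp [h]
      · intro h
        by_contra hne
        lift g ft to ℕ using hne with j hj
        have h2 : ((j + 1 : ℕ) : ℕ∞) ≤ (j : ℕ∞) := h (j + 1)
        have h3 : j + 1 ≤ j := Nat.cast_le.mp h2
        omega
    rw [h1]
    exact MeasurableSet.iInter fun k => hEmeas k
  | coe n =>
    have h1 : g ⁻¹' {(n : ℕ∞)} =
        {ft | (n : ℕ∞) ≤ g ft} \ {ft | ((n + 1 : ℕ) : ℕ∞) ≤ g ft} := by
      ext ft
      simp only [Set.mem_preimage, Set.mem_singleton_iff, Set.mem_diff, Set.mem_setOf_eq]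
      constructor
      · intro h
        refine ⟨le_of_eq h.symm, ?_⟩
        rw [h]
        intro h2
        exact absurd (by exact_mod_cast h2) (by omega)
      · rintro ⟨h1, h2⟩
        have h3 : g ft < ((n + 1 : ℕ) : ℕ∞) := not_le.mp h2
        lift g ft to ℕ using h3.ne_top with j hj
        have hjn : j < n + 1 := Nat.cast_lt.mp h3
        have hnj : n ≤ j := Nat.cast_le.mp h1
        exact_mod_cast Nat.cast_inj.mpr (by omega : j = n)
    rw [h1]
    exact (hEmeas n).diff (hEmeas (n + 1))
end
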